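/- arXiv:1312.5634 — 2 statements merged into one kernel-verified Lean document; each statement's English description precedes it below -/
import Mathlib

section
/- The 4×4 matrix U with rows (1,1,0,0), (1,0,1,0), (0,1,0,1), (0,0,1,1) has rank 3 but does not admit a factorization U = A·B with A a nonnegative 4×3 matrix and B a nonnegative 3×4 matrix; i.e., its nonnegative rank is 4. -/
/-!
Rank: the last row of `U` is the second plus the third minus the first, while the leading
`3 × 3` minor is `-1`.

Nonnegative rank: if `U = A * B` with nonnegative factors, each positive entry `U i j` picks
some `k` with `A i k > 0` and `B k j > 0`. For the entries `(0,0)`, `(1,2)`, `(2,1)`, `(3,3)`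
these `k` are distinct, because two of them sharing `k` would force both crossed entries
`U i j'` and `U i' j` to be positive, while one of them is `0`. So `A` needs `4` columns.
-/

open Matrix Finset

namespace Matrix

variable {l m n R : Type*} [Fintype l]

def IsFoolingSet [Zero R] [LT R] (P : Matrix m n R) (s : Finset (m × n)) : Prop :=
  (∀ p ∈ s, 0 < P p.1 p.2) ∧
    ∀ p ∈ s, ∀ q ∈ s, p ≠ q → P p.1 q.2 = 0 ∨ P q.1 p.2 = 0

section OrderedSemiring

variable [Semiring R] [LinearOrder R] [IsStrictOrderedRing R]
  {A : Matrix m l R} {B : Matrix l n R}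

theorem mul_apply_pos_iff_of_nonneg (hA : ∀ i k, 0 ≤ A i k) (hB : ∀ k j, 0 ≤ B k j)
    (i : m) (j : n) : 0 < (A * B) i j ↔ ∃ k, 0 < A i k ∧ 0 < B k j := by
  rw [mul_apply, sum_pos_iff_of_nonneg fun k _ => mul_nonneg (hA i k) (hB k j)]
  simp only [mem_univ, true_and]
  refine exists_congr fun k => ⟨fun h => ⟨?_, ?_⟩, fun ⟨ha, hb⟩ => mul_pos ha hb⟩
  · exact (hA i k).lt_of_ne fun h0 => h.ne' (by rw [← h0, zero_mul])
  · exact (hB k j).lt_of_ne fun h0 => h.ne' (by rw [← h0, mul_zero])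

theorem IsFoolingSet.card_le_of_mul (hA : ∀ i k, 0 ≤ A i k) (hB : ∀ k j, 0 ≤ B k j)
    {s : Finset (m × n)} (hs : IsFoolingSet (A * B) s) : #s ≤ Fintype.card l := by
  have hk : ∀ p ∈ s, ∃ k, 0 < A p.1 k ∧ 0 < B k p.2 := fun p hp =>
    (mul_apply_pos_iff_of_nonneg hA hB _ _).1 (hs.1 p hp)
  choose k hkA hkB using hk
  rw [← Fintype.card_coe s]
  refine Fintype.card_le_of_injective (fun p : s => k p p.2) ?_
  rintro ⟨p, hp⟩ ⟨q, hq⟩ (hpq : k p hp = k q hq)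
  by_contra hne
  have hpos := mul_apply_pos_iff_of_nonneg hA hB
  rcases hs.2 p hp q hq (fun h => hne (Subtype.ext h)) with h | h
  · exact ((hpos _ _).2 ⟨k p hp, hkA p hp, hpq ▸ hkB q hq⟩).ne' h
  · exact ((hpos _ _).2 ⟨k p hp, hpq ▸ hkA q hq, hkB p hp⟩).ne' h

end OrderedSemiring

end Matrix

/-- Up to permuting rows and columns, the slack matrix of a square. -/
def cycleMatrix : Matrix (Fin 4) (Fin 4) ℝ := !![1,1,0,0; 1,0,1,0; 0,1,0,1; 0,0,1,1]

theorem rank_cycleMatrix : cycleMatrix.rank = 3 := by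
  apply le_antisymm
  · have hfac : cycleMatrix =
        (!![1,0,0; 0,1,0; 0,0,1; -1,1,1] : Matrix (Fin 4) (Fin 3) ℝ) *
          cycleMatrix.submatrix Fin.castSucc id := by
      ext i j
      fin_cases i <;> fin_cases j <;> norm_num [cycleMatrix, mul_apply, Fin.sum_univ_succ]
    calc cycleMatrix.rank ≤ (cycleMatrix.submatrix Fin.castSucc id).rank :=
          (congrArg rank hfac).trans_le (rank_mul_le_right _ _)
      _ ≤ 3 := (rank_le_card_height (R := ℝ) _).trans_eq (Fintype.card_fin 3)
  · have hdet : (cycleMatrix.submatrix Fin.castSucc Fin.castSucc).det ≠ 0 := by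
      norm_num [det_fin_three, cycleMatrix, Fin.castSucc, Fin.castAdd, Fin.castLE]
    calc 3 = (cycleMatrix.submatrix Fin.castSucc Fin.castSucc).rank := by
          rw [rank_of_det_ne_zero hdet, Fintype.card_fin]
      _ ≤ cycleMatrix.rank := rank_submatrix_le _ _ _

theorem isFoolingSet_cycleMatrix :
    cycleMatrix.IsFoolingSet {(0, 0), (1, 2), (2, 1), (3, 3)} := by
  refine ⟨?_, ?_⟩ <;> simp [cycleMatrix]

theorem stmt_0 :
    (!![1,1,0,0; 1,0,1,0; 0,1,0,1; 0,0,1,1] : Matrix (Fin 4) (Fin 4) ℝ).rank = 3 ∧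
    ¬ ∃ (A : Matrix (Fin 4) (Fin 3) ℝ) (B : Matrix (Fin 3) (Fin 4) ℝ),
        (∀ i k, 0 ≤ A i k) ∧ (∀ k j, 0 ≤ B k j) ∧
        (!![1,1,0,0; 1,0,1,0; 0,1,0,1; 0,0,1,1] : Matrix (Fin 4) (Fin 4) ℝ) = A * B := by
  refine ⟨rank_cycleMatrix, ?_⟩
  rintro ⟨A, B, hA, hB, hU⟩
  have hfool : (A * B).IsFoolingSet {(0, 0), (1, 2), (2, 1), (3, 3)} :=
    (show cycleMatrix = A * B from hU) ▸ isFoolingSet_cycleMatrix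
  have h4 := hfool.card_le_of_mul hA hB
  simp at h4
end

section
/- A nonnegative m×n real matrix P of rank r admits a nonnegative factorization P = A·B with A of size m×r and B of size r×n if and only if there exists a polytope Δ with at most r vertices such that B(P) ⊆ Δ ⊆ A(P), where A(P) = span(P) ∩ Δ_{m-1} and B(P) = cone(P) ∩ Δ_{m-1}. -/
/-!
Given `P = A * B` with `A, B ≥ 0`, every point of `cone(P) ∩ Δ` is a nonnegative combination of
the columns of `A`, hence a convex combination of the nonzero columns of `A` rescaled onto the
simplex; these at most `r` points lie in `span(A) = span(P)`, because `span(P) ⊆ span(A)` and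
`dim span(A) ≤ r = rank P`. Conversely, every column of `P` is a
nonnegative multiple of its rescaling into `cone(P) ∩ Δ ⊆ conv(V)`, so it is a nonnegative
combination of the vertices `V ⊆ Δ`, which gives a factorization of inner dimension `|V| ≤ r`.
-/

/-- The polytope `𝒜 = span(P) ∩ Δ_{m-1}`: linear span of the columns of `P`
intersected with the standard simplex. -/
def spanSimplex {m n : ℕ} (P : Matrix (Fin m) (Fin n) ℝ) : Set (Fin m → ℝ) :=
  (Submodule.span ℝ (Set.range fun j => fun i => P i j) : Set (Fin m → ℝ)) ∩
    stdSimplex ℝ (Fin m)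

/-- The polytope `ℬ = cone(P) ∩ Δ_{m-1}`: nonnegative cone of the columns of `P`
intersected with the standard simplex. -/
def coneSimplex {m n : ℕ} (P : Matrix (Fin m) (Fin n) ℝ) : Set (Fin m → ℝ) :=
  {x | ∃ c : Fin n → ℝ, (∀ j, 0 ≤ c j) ∧ x = fun i => ∑ j, c j * P i j} ∩
    stdSimplex ℝ (Fin m)

open Finset Matrix Submodule

section Normalize

variable {ι : Type*} [Fintype ι]

noncomputable def normalizeSum (v : ι → ℝ) : ι → ℝ := (∑ i, v i)⁻¹ • v

theorem sum_smul_normalizeSum {v : ι → ℝ} (hv : 0 ≤ v) : (∑ i, v i) • normalizeSum v = v := by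
  by_cases hs : ∑ i, v i = 0
  · rw [hs, zero_smul, eq_comm]
    funext i
    exact (sum_eq_zero_iff_of_nonneg fun i _ => hv i).mp hs i (mem_univ i)
  · rw [normalizeSum, smul_inv_smul₀ hs]

theorem normalizeSum_mem_stdSimplex {v : ι → ℝ} (hv : 0 ≤ v) (hs : 0 < ∑ i, v i) :
    normalizeSum v ∈ stdSimplex ℝ ι := by
  refine ⟨fun i => mul_nonneg (inv_nonneg.mpr hs.le) (hv i), ?_⟩
  simp only [normalizeSum, Pi.smul_apply, smul_eq_mul, ← mul_sum, inv_mul_cancel₀ hs.ne']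

end Normalize

section NormalizedCols

variable {ι κ : Type*} [Fintype ι] [Fintype κ]

noncomputable def normalizedCols (A : Matrix ι κ ℝ) : Finset (ι → ℝ) :=
  (univ.filter fun k => 0 < ∑ i, A i k).image fun k => normalizeSum (A.col k)

theorem card_normalizedCols_le (A : Matrix ι κ ℝ) :
    (normalizedCols A).card ≤ Fintype.card κ :=
  card_image_le.trans (card_le_univ _)

theorem convexHull_normalizedCols_subset {A : Matrix ι κ ℝ} (hA : ∀ i k, 0 ≤ A i k) :
    convexHull ℝ (normalizedCols A : Set (ι → ℝ)) ⊆
      (span ℝ (Set.range A.col) : Set (ι → ℝ)) ∩ stdSimplex ℝ ι := by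
  refine convexHull_min ?_ ((span ℝ _).convex.inter (convex_stdSimplex ℝ ι))
  intro _ hv
  obtain ⟨k, hk, rfl⟩ := mem_image.mp hv
  exact ⟨smul_mem _ _ (subset_span ⟨k, rfl⟩),
    normalizeSum_mem_stdSimplex (hA · k) (mem_filter.mp hk).2⟩

theorem mulVec_mem_convexHull_normalizedCols {A : Matrix ι κ ℝ} (hA : ∀ i k, 0 ≤ A i k)
    {y : κ → ℝ} (hy : 0 ≤ y) (hx : A *ᵥ y ∈ stdSimplex ℝ ι) :
    A *ᵥ y ∈ convexHull ℝ (normalizedCols A : Set (ι → ℝ)) := by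
  set w : κ → ℝ := fun k => y k * ∑ i, A i k
  have hdecomp : A *ᵥ y = ∑ k, w k • normalizeSum (A.col k) := by
    calc A *ᵥ y = ∑ k, y k • A.col k := by ext i; simp [mulVec, dotProduct, mul_comm]
      _ = _ := sum_congr rfl fun k _ => by
        rw [mul_smul]
        exact congrArg (y k • ·) (sum_smul_normalizeSum (v := A.col k) (hA · k)).symm
  have hw : ∑ k, w k = 1 := by
    rw [← hx.2]
    simp only [w, mulVec, dotProduct, mul_sum]
    rw [sum_comm]
    simp_rw [mul_comm]
  rw [hdecomp, ← finsum_eq_sum_of_fintype]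
  refine (convex_convexHull ℝ _).finsum_mem
    (fun k => mul_nonneg (hy k) (sum_nonneg fun i _ => hA i k))
    (by rwa [finsum_eq_sum_of_fintype]) fun k hk => subset_convexHull ℝ _ ?_
  have hs : 0 < ∑ i, A i k :=
    (sum_nonneg fun i _ => hA i k).lt_of_ne (right_ne_zero_of_mul hk).symm
  exact mem_image_of_mem _ (mem_filter.mpr ⟨mem_univ k, hs⟩)

end NormalizedCols

theorem Matrix.span_range_col_mul_eq_left {ι α κ K : Type*} [Fintype α] [Fintype κ] [Field K]
    (A : Matrix ι α K) (B : Matrix α κ K) (h : Fintype.card α ≤ (A * B).rank) :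
    span K (Set.range (A * B).col) = span K (Set.range A.col) := by
  rw [← range_mulVecLin, ← range_mulVecLin]
  refine eq_of_le_of_finrank_le ?_ ?_
  · rw [mulVecLin_mul]
    exact LinearMap.range_comp_le_range _ _
  · exact A.rank_le_card_width.trans h

section Factorization

variable {ι κ α β : Type*} [Fintype α] [Fintype β]

def HasNonnegFactorization (P : Matrix ι κ ℝ) (α : Type*) [Fintype α] : Prop :=
  ∃ (A : Matrix ι α ℝ) (B : Matrix α κ ℝ), (∀ i k, 0 ≤ A i k) ∧ (∀ k j, 0 ≤ B k j) ∧ P = A * B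

theorem HasNonnegFactorization.of_card_le {P : Matrix ι κ ℝ} (h : HasNonnegFactorization P α)
    (hcard : Fintype.card α ≤ Fintype.card β) : HasNonnegFactorization P β := by
  classical
  obtain ⟨A, B, hA, hB, rfl⟩ := h
  obtain ⟨f⟩ := Function.Embedding.nonempty_of_card_le hcard
  let e : α ⊕ {b // b ∉ Set.range f} ≃ β :=
    ((Equiv.ofInjective f f.injective).sumCongr (Equiv.refl _)).trans (Equiv.sumCompl _)
  refine ⟨(fromCols A 0).submatrix id e.symm, (fromRows B 0).submatrix e.symm id, ?_, ?_, ?_⟩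
  · intro i b
    change 0 ≤ fromCols A 0 i (e.symm b)
    rcases e.symm b with a | c
    · exact hA i a
    · exact le_rfl
  · intro b j
    change 0 ≤ fromRows B 0 (e.symm b) j
    rcases e.symm b with a | c
    · exact hB a j
    · exact le_rfl
  · rw [submatrix_mul_equiv, fromCols_mul_fromRows, Matrix.zero_mul, add_zero, submatrix_id_id]

theorem hasNonnegFactorization_of_forall_col_eq_sum [Fintype ι] {P : Matrix ι κ ℝ}
    {V : Finset (ι → ℝ)} (hV : ∀ v ∈ V, 0 ≤ v)
    (hcols : ∀ j, ∃ c : (ι → ℝ) → ℝ, (∀ v ∈ V, 0 ≤ c v) ∧ P.col j = ∑ v ∈ V, c v • v) :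
    HasNonnegFactorization P V := by
  choose c hc hPc using hcols
  refine ⟨of fun i (v : V) => (v : ι → ℝ) i, of fun (v : V) j => c j v,
    fun i v => hV v v.2 i, fun v j => hc j v v.2, ?_⟩
  ext i j
  simpa [mul_apply, mul_comm, ← sum_coe_sort V] using congrFun (hPc j) i

end Factorization

section Polytope

variable {m n : ℕ} {P : Matrix (Fin m) (Fin n) ℝ}

theorem normalizeSum_col_mem_coneSimplex (hP : ∀ i j, 0 ≤ P i j) {j : Fin n}
    (hs : 0 < ∑ i, P i j) : normalizeSum (P.col j) ∈ coneSimplex P := by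
  refine ⟨⟨Pi.single j (∑ i, P i j)⁻¹, ?_, ?_⟩, normalizeSum_mem_stdSimplex (hP · j) hs⟩
  · intro k
    rcases eq_or_ne k j with rfl | hk
    · simpa using hs.le
    · simp [hk]
  · ext i
    simp [normalizeSum, Pi.single_apply]

theorem exists_col_eq_sum_of_coneSimplex_subset (hP : ∀ i j, 0 ≤ P i j) {V : Finset (Fin m → ℝ)}
    (hBV : coneSimplex P ⊆ convexHull ℝ ↑V) (j : Fin n) :
    ∃ c : (Fin m → ℝ) → ℝ, (∀ v ∈ V, 0 ≤ c v) ∧ P.col j = ∑ v ∈ V, c v • v := by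
  have hcol : (∑ i, P i j) • normalizeSum (P.col j) = P.col j :=
    sum_smul_normalizeSum (hP · j)
  rcases (sum_nonneg fun i (_ : i ∈ univ) => hP i j).eq_or_lt with hs | hs
  · refine ⟨0, fun _ _ => le_rfl, ?_⟩
    rw [← hcol, ← hs]
    simp
  · obtain ⟨w, hw0, -, hwx⟩ :=
      mem_convexHull'.mp (hBV (normalizeSum_col_mem_coneSimplex hP hs))
    refine ⟨fun v => (∑ i, P i j) * w v, fun v hv => mul_nonneg hs.le (hw0 v hv), ?_⟩
    simp_rw [mul_smul, ← smul_sum, hwx]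
    exact hcol.symm

theorem HasNonnegFactorization.exists_polytope_between {α : Type*} [Fintype α]
    (h : HasNonnegFactorization P α) (hrank : Fintype.card α ≤ P.rank) :
    ∃ V : Finset (Fin m → ℝ), V.card ≤ Fintype.card α ∧
      coneSimplex P ⊆ convexHull ℝ ↑V ∧ convexHull ℝ ↑V ⊆ spanSimplex P := by
  obtain ⟨A, B, hA, hB, rfl⟩ := h
  refine ⟨normalizedCols A, card_normalizedCols_le A, ?_, ?_⟩
  · rintro _ ⟨⟨c, hc, rfl⟩, hx⟩
    have hmul : (fun i => ∑ j, c j * (A * B) i j) = A *ᵥ (B *ᵥ c) := by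
      rw [mulVec_mulVec]
      ext i
      simp [mulVec, dotProduct, mul_comm]
    rw [hmul] at hx ⊢
    exact mulVec_mem_convexHull_normalizedCols hA
      (fun k => sum_nonneg fun j (_ : j ∈ univ) => mul_nonneg (hB k j) (hc j)) hx
  · change _ ⊆ (span ℝ (Set.range (A * B).col) : Set (Fin m → ℝ)) ∩ _
    rw [span_range_col_mul_eq_left A B hrank]
    exact convexHull_normalizedCols_subset hA

end Polytope

theorem stmt_4_general (m n r : ℕ) (P : Matrix (Fin m) (Fin n) ℝ)
    (hP : ∀ i j, 0 ≤ P i j) (hrank : P.rank = r) :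
    (∃ (A : Matrix (Fin m) (Fin r) ℝ) (B : Matrix (Fin r) (Fin n) ℝ),
        (∀ i k, 0 ≤ A i k) ∧ (∀ k j, 0 ≤ B k j) ∧ P = A * B)
      ↔ ∃ V : Finset (Fin m → ℝ), V.card ≤ r ∧
          coneSimplex P ⊆ convexHull ℝ (V : Set (Fin m → ℝ)) ∧
          convexHull ℝ (V : Set (Fin m → ℝ)) ⊆ spanSimplex P := by
  constructor
  · intro h
    simpa using HasNonnegFactorization.exists_polytope_between (α := Fin r) h (by simp [hrank])
  · rintro ⟨V, hcard, hBV, hVA⟩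
    have hV : ∀ v ∈ V, 0 ≤ v := fun v hv => (hVA (subset_convexHull ℝ _ hv)).2.1
    exact (hasNonnegFactorization_of_forall_col_eq_sum hV
      (exists_col_eq_sum_of_coneSimplex_subset hP hBV)).of_card_le (by simpa using hcard)

theorem stmt_4 (m n r : ℕ) (P : Matrix (Fin m) (Fin n) ℝ)
    (hP : ∀ i j, 0 ≤ P i j) (hrank : P.rank = r)
    (hcol : ∀ j, ∃ i, P i j ≠ 0) :
    (∃ (A : Matrix (Fin m) (Fin r) ℝ) (B : Matrix (Fin r) (Fin n) ℝ),
        (∀ i k, 0 ≤ A i k) ∧ (∀ k j, 0 ≤ B k j) ∧ P = A * B)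
      ↔ ∃ V : Finset (Fin m → ℝ), V.card ≤ r ∧
          coneSimplex P ⊆ convexHull ℝ (V : Set (Fin m → ℝ)) ∧
          convexHull ℝ (V : Set (Fin m → ℝ)) ⊆ spanSimplex P :=
  stmt_4_general m n r P hP hrank
end
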